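/- arXiv:2605.17051 — 3 statements merged into one kernel-verified Lean document; each statement's English description precedes it below -/
import Mathlib

section
/- For every number of nodes n ≥ 3, every initial center c₀, and every finite request sequence σ, the deterministic online algorithm PivotTracking satisfies ALG(σ) ≤ (3/2)·OPT(σ). -/
/-!
Online graph embedding in a star host graph.

Nodes are elements of a finite type `V`.  A configuration is determined by the
single node at the center.  A request is an (ordered representation of an)
unordered pair of distinct nodes `r = (r.1, r.2)`; serving it with center `c`
costs `1` if `c ∈ {r.1, r.2}` and `2` otherwise; changing the center costs `1`.
-/

/-- Cost of serving request `r` when node `c` is at the center of the star. -/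
def serveCost {V : Type*} [DecidableEq V] (c : V) (r : V × V) : ℕ :=
  if c = r.1 ∨ c = r.2 then 1 else 2

/-- Total cost of the schedule `cs` (the sequence of centers, one per request)
on request sequence `σ`, starting from initial center `c₀`:
`Σᵢ ([cᵢ ≠ cᵢ₋₁] + serveCost cᵢ σᵢ)`. -/
def schedCost {V : Type*} [DecidableEq V] (c₀ : V) : List (V × V) → List V → ℕ
  | [], _ => 0
  | _ :: _, [] => 0
  | r :: σ, c :: cs => (if c = c₀ then 0 else 1) + serveCost c r + schedCost c σ cs

/-- `OPT c₀ σ` : minimum cost over all (offline) schedules for `σ`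
starting with center `c₀`. -/
noncomputable def OPT {V : Type*} [DecidableEq V] (c₀ : V) (σ : List (V × V)) : ℕ :=
  sInf {k | ∃ cs : List V, cs.length = σ.length ∧ schedCost c₀ σ cs = k}

/-- One step of the deterministic algorithm PivotTracking.  The state is a pair
(current center, candidate set `C`).  On request `r`: if `C ∩ {r.1, r.2} ≠ ∅`
(intersection behavior), set `C ← C ∩ {r.1, r.2}` and, if the current center is
not in the new `C`, migrate an element of the new `C` to the center (when both
endpoints remain, the tie is broken by the fixed rule `tb`); otherwise (union
behavior), set `C ← C ∪ {r.1, r.2}` and do not migrate. -/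
def ptStep {V : Type*} [DecidableEq V] (tb : V → V → V) (st : V × Finset V)
    (r : V × V) : V × Finset V :=
  if (st.2 ∩ {r.1, r.2}).Nonempty then
    let C' := st.2 ∩ {r.1, r.2}
    (if st.1 ∈ C' then st.1
     else if C' = {r.1, r.2} then tb r.1 r.2
     else if r.1 ∈ C' then r.1 else r.2, C')
  else (st.1, st.2 ∪ {r.1, r.2})

/-- Total cost (migrations plus serving costs) paid by PivotTracking, started
in state `st`, on the request list `σ`. -/
def ptCost {V : Type*} [DecidableEq V] (tb : V → V → V) :
    V × Finset V → List (V × V) → ℕ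
  | _, [] => 0
  | st, r :: σ =>
    (if (ptStep tb st r).1 = st.1 then 0 else 1) + serveCost (ptStep tb st r).1 r
      + ptCost tb (ptStep tb st r) σ

/-!
Amortized analysis. Let `C` be PivotTracking's candidate set and `c` the center of an optimal
schedule, and put `Φ(C, c) = min(|C| - 1, 2)` if `c ∈ C` and `Φ(C, c) = 3 + min(|C| - 1, 1)`
otherwise. On every request, twice PivotTracking's cost plus the change of `Φ` is at most three
times the schedule's serving cost, and a migration of `c` changes `Φ` by at most `3`. As
`Φ({c₀}, c₀) = 0` and `Φ ≥ 0`, summing over the requests gives `2 · ALG ≤ 3 · OPT`.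
-/

def pivotPotential {V : Type*} [DecidableEq V] (C : Finset V) (c : V) : ℕ :=
  if c ∈ C then min (C.card - 1) 2 else 3 + min (C.card - 1) 1

section PivotTracking

variable {V : Type*} [DecidableEq V]

theorem serveCost_eq (c u v : V) :
    serveCost c (u, v) = if c ∈ ({u, v} : Finset V) then 1 else 2 := by
  simp [serveCost]

theorem pivotPotential_le_add (C : Finset V) (c c' : V) :
    pivotPotential C c ≤ 3 * (if c = c' then 0 else 1) + pivotPotential C c' := by
  rcases eq_or_ne c c' with rfl | h
  · simp
  · unfold pivotPotential
    split_ifs <;> omega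

variable {a : V} {C : Finset V} {u v : V}

theorem pivotPotential_union_le (hr : u ≠ v) (ha : a ∈ C) (h : ¬ (C ∩ {u, v}).Nonempty)
    (c : V) :
    2 * serveCost a (u, v) + pivotPotential (C ∪ {u, v}) c
      ≤ 3 * serveCost c (u, v) + pivotPotential C c := by
  have hdisj : Disjoint C {u, v} := Finset.disjoint_iff_inter_eq_empty.2
    (Finset.not_nonempty_iff_eq_empty.1 h)
  have haP : a ∉ ({u, v} : Finset V) := Finset.disjoint_left.1 hdisj ha
  have hcP : c ∈ ({u, v} : Finset V) → c ∉ C := fun hc hcC =>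
    Finset.disjoint_left.1 hdisj hcC hc
  have hcard : (C ∪ {u, v}).card = C.card + 2 := by
    rw [Finset.card_union_of_disjoint hdisj, Finset.card_pair hr]
  have hC : 1 ≤ C.card := Finset.card_pos.2 ⟨a, ha⟩
  simp only [serveCost_eq, pivotPotential, hcard, Finset.mem_union, if_neg haP]
  by_cases hc : c ∈ ({u, v} : Finset V)
  · simp only [hc, hcP hc, or_true, ↓reduceIte]
    omega
  · by_cases hcC : c ∈ C <;> simp only [hc, hcC, or_false, ↓reduceIte] <;> omega

theorem pivotPotential_inter_le {a' : V} (ha : a ∈ C) (ha' : a' ∈ C ∩ {u, v})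
    (hstay : a ∈ C ∩ {u, v} → a' = a) (c : V) :
    2 * ((if a' = a then 0 else 1) + serveCost a' (u, v)) + pivotPotential (C ∩ {u, v}) c
      ≤ 3 * serveCost c (u, v) + pivotPotential C c := by
  set S := C ∩ {u, v}
  have hSC : S ⊆ C := Finset.inter_subset_left
  have hSP : S ⊆ {u, v} := Finset.inter_subset_right
  have hS1 : 1 ≤ S.card := Finset.card_pos.2 ⟨a', ha'⟩
  have hS2 : S.card ≤ 2 := (Finset.card_le_card hSP).trans Finset.card_le_two
  have hmig : a ∉ S → S.card + 1 ≤ C.card := fun haS => by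
    rw [← Finset.card_insert_of_notMem haS]
    exact Finset.card_le_card (Finset.insert_subset ha hSC)
  have hcS : c ∈ S ↔ c ∈ C ∧ c ∈ ({u, v} : Finset V) := Finset.mem_inter
  have hlone : c ∈ ({u, v} : Finset V) → c ∉ C → S.card ≤ 1 := fun hc hcC => by
    have : S ⊆ ({u, v} : Finset V).erase c := fun x hx =>
      Finset.mem_erase.2 ⟨fun hxc => hcC (hxc ▸ hSC hx), hSP hx⟩
    have := (Finset.card_le_card this).trans_eq (Finset.card_erase_of_mem hc)
    have := (Finset.card_le_two (a := u) (b := v))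
    omega
  simp only [serveCost_eq, pivotPotential, if_pos (hSP ha')]
  by_cases haS : a ∈ S
  · simp only [hstay haS, if_true]
    by_cases hc : c ∈ ({u, v} : Finset V) <;> by_cases hcC : c ∈ C <;>
      simp only [hcS, hc, hcC, and_true, and_false, ↓reduceIte] <;> omega
  · have ha'a : a' ≠ a := fun h => haS (h ▸ ha')
    have := hmig haS
    by_cases hc : c ∈ ({u, v} : Finset V) <;> by_cases hcC : c ∈ C <;>
      simp only [hcS, hc, hcC, ha'a, and_true, and_false, ↓reduceIte, not_false_eq_true,
        forall_const] at hlone ⊢ <;> omega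

variable (tb : V → V → V)

theorem ptStep_of_not_nonempty (h : ¬ (C ∩ {u, v}).Nonempty) :
    ptStep tb (a, C) (u, v) = (a, C ∪ {u, v}) := by
  simp [ptStep, h]

theorem ptStep_snd_of_nonempty (h : (C ∩ {u, v}).Nonempty) :
    (ptStep tb (a, C) (u, v)).2 = C ∩ {u, v} := by
  simp [ptStep, h]

theorem ptStep_fst_of_mem (h : a ∈ C ∩ {u, v}) : (ptStep tb (a, C) (u, v)).1 = a := by
  simp [ptStep, h, show (C ∩ {u, v}).Nonempty from ⟨a, h⟩]

variable {tb}

theorem ptStep_fst_mem_of_nonempty (htb : ∀ u v : V, tb u v = u ∨ tb u v = v)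
    (h : (C ∩ {u, v}).Nonempty) : (ptStep tb (a, C) (u, v)).1 ∈ C ∩ {u, v} := by
  simp only [ptStep, if_pos h]
  split_ifs with ha hS hu
  · exact ha
  · rw [hS]; rcases htb u v with h | h <;> simp [h]
  · exact hu
  · obtain ⟨w, hw⟩ := h
    have : w = u ∨ w = v := by simpa using Finset.mem_of_mem_inter_right hw
    rcases this with rfl | rfl
    · exact absurd hw hu
    · exact hw

theorem ptStep_fst_mem_snd (htb : ∀ u v : V, tb u v = u ∨ tb u v = v) (ha : a ∈ C) :
    (ptStep tb (a, C) (u, v)).1 ∈ (ptStep tb (a, C) (u, v)).2 := by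
  by_cases h : (C ∩ {u, v}).Nonempty
  · rw [ptStep_snd_of_nonempty tb h]
    exact ptStep_fst_mem_of_nonempty htb h
  · rw [ptStep_of_not_nonempty tb h]
    exact Finset.mem_union_left _ ha

theorem pivotPotential_ptStep_le (htb : ∀ u v : V, tb u v = u ∨ tb u v = v) (hr : u ≠ v)
    (ha : a ∈ C) (c : V) :
    2 * ((if (ptStep tb (a, C) (u, v)).1 = a then 0 else 1)
        + serveCost (ptStep tb (a, C) (u, v)).1 (u, v))
      + pivotPotential (ptStep tb (a, C) (u, v)).2 c
      ≤ 3 * serveCost c (u, v) + pivotPotential C c := by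
  by_cases h : (C ∩ {u, v}).Nonempty
  · rw [ptStep_snd_of_nonempty tb h]
    exact pivotPotential_inter_le ha (ptStep_fst_mem_of_nonempty htb h)
      (ptStep_fst_of_mem tb) c
  · simpa [ptStep_of_not_nonempty tb h] using pivotPotential_union_le hr ha h c

theorem two_mul_ptCost_le (htb : ∀ u v : V, tb u v = u ∨ tb u v = v) :
    ∀ (σ : List (V × V)) (cs : List V), cs.length = σ.length → (∀ r ∈ σ, r.1 ≠ r.2) →
      ∀ {a : V} {C : Finset V}, a ∈ C → ∀ c : V,
        2 * ptCost tb (a, C) σ ≤ 3 * schedCost c σ cs + pivotPotential C c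
  | [], _, _, _, _, _, _, _ => by simp [ptCost]
  | _ :: _, [], hlen, _, _, _, _, _ => by simp at hlen
  | (u, v) :: σ, c' :: cs, hlen, hσ, a, C, ha, c => by
    have hstep := pivotPotential_ptStep_le htb (hσ (u, v) List.mem_cons_self) ha c'
    have hrest := two_mul_ptCost_le htb σ cs (Nat.succ.inj hlen)
      (fun r hr => hσ r (List.mem_cons_of_mem _ hr))
      (ptStep_fst_mem_snd (u := u) (v := v) htb ha) c'
    have hmove := pivotPotential_le_add C c' c
    rw [Prod.mk.eta] at hrest
    rw [ptCost, schedCost]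
    dsimp only at hstep ⊢
    omega

end PivotTracking

theorem pivotTracking_three_halves_competitive_general
    {V : Type*} [DecidableEq V]
    (c₀ : V) (σ : List (V × V)) (hσ : ∀ r ∈ σ, r.1 ≠ r.2)
    (tb : V → V → V) (htb : ∀ u v : V, tb u v = u ∨ tb u v = v) :
    (ptCost tb (c₀, {c₀}) σ : ℚ) ≤ (3 / 2) * (OPT c₀ σ : ℚ) := by
  obtain ⟨cs, hlen, hopt⟩ : OPT c₀ σ ∈
      {k | ∃ cs : List V, cs.length = σ.length ∧ schedCost c₀ σ cs = k} :=
    Nat.sInf_mem ⟨_, List.replicate σ.length c₀, List.length_replicate, rfl⟩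
  have h := two_mul_ptCost_le htb σ cs hlen hσ (Finset.mem_singleton_self c₀) c₀
  simp only [pivotPotential, Finset.mem_singleton_self, ↓reduceIte, Finset.card_singleton,
    hopt] at h
  have hq : (2 * ptCost tb (c₀, {c₀}) σ : ℚ) ≤ 3 * OPT c₀ σ := by exact_mod_cast h
  linarith

/-- For every number of nodes `n ≥ 3`, every initial center
`c₀` and every finite request sequence `σ` (of unordered pairs of distinct
nodes), the deterministic online algorithm PivotTracking (with any fixed
tie-breaking rule) satisfies `ALG(σ) ≤ (3/2) · OPT(σ)`. -/
theorem pivotTracking_three_halves_competitive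
    {V : Type*} [DecidableEq V] [Fintype V] (hn : 3 ≤ Fintype.card V)
    (c₀ : V) (σ : List (V × V)) (hσ : ∀ r ∈ σ, r.1 ≠ r.2)
    (tb : V → V → V) (htb : ∀ u v : V, tb u v = u ∨ tb u v = v) :
    (ptCost tb (c₀, {c₀}) σ : ℚ) ≤ (3 / 2) * (OPT c₀ σ : ℚ) :=
  pivotTracking_three_halves_competitive_general c₀ σ hσ tb htb
end

section
/- On the star with exactly n = 3 nodes: for every deterministic online algorithm A and every real c < 3/2, there exists a finite request sequence σ with A(σ) ≥ c·OPT(σ). Hence no deterministic online algorithm is c-competitive for any c < 3/2. -/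
/-- The schedule produced by the deterministic online algorithm `A`
(which maps the initial center and the revealed prefix `σ₁, …, σᵢ` to the
center `cᵢ` used to serve `σᵢ`). -/
def onlineSched {V : Type*} (A : V → List (V × V) → V) (c₀ : V)
    (σ : List (V × V)) : List V :=
  (List.range σ.length).map fun i => A c₀ (σ.take (i + 1))

/-- Total cost of the deterministic online algorithm `A` on `σ`. -/
def onlineCost {V : Type*} [DecidableEq V] (A : V → List (V × V) → V) (c₀ : V)
    (σ : List (V × V)) : ℕ :=
  schedCost c₀ σ (onlineSched A c₀ σ)

/-!
The adversary always requests the two nodes other than the online algorithm's current center, so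
the algorithm pays at least 2 per request: 2 if it stays, at least 1 + 1 if it moves. Offline, some
node is the excluded one in at most a third of the `m` requests; moving there once and staying
costs at most `1 + m + m/3`. Hence `ALG / OPT ≥ 2m / (4m/3 + 1) → 3/2`.
-/

section Schedules

variable {V : Type*} [DecidableEq V]

lemma one_le_serveCost (c : V) (r : V × V) : 1 ≤ serveCost c r := by
  unfold serveCost; split <;> omega

lemma schedCost_singleton (c₀ c : V) (r : V × V) :
    schedCost c₀ [r] [c] = (if c = c₀ then 0 else 1) + serveCost c r := by
  simp [schedCost]

lemma schedCost_append (c₀ : V) : ∀ (σ₁ : List (V × V)) (cs₁ : List V),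
    cs₁.length = σ₁.length → ∀ (σ₂ : List (V × V)) (cs₂ : List V),
    schedCost c₀ (σ₁ ++ σ₂) (cs₁ ++ cs₂)
      = schedCost c₀ σ₁ cs₁ + schedCost (cs₁.getLastD c₀) σ₂ cs₂
  | [], [], _, _, _ => by simp [schedCost]
  | r :: σ, d :: cs, h, σ₂, cs₂ => by
    have ih := schedCost_append d σ cs (by simpa using h) σ₂ cs₂
    simp only [List.cons_append, schedCost, ih, List.getLastD_cons]
    omega

lemma length_le_schedCost (c₀ : V) : ∀ (σ : List (V × V)) (cs : List V),
    cs.length = σ.length → σ.length ≤ schedCost c₀ σ cs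
  | [], _, _ => Nat.zero_le _
  | r :: σ, d :: cs, h => by
    have ih := length_le_schedCost d σ cs (by simpa using h)
    have := one_le_serveCost d r
    simp only [schedCost, List.length_cons]
    omega

lemma schedCost_replicate_le (z : V) : ∀ (c₀ : V) (σ : List (V × V)),
    schedCost c₀ σ (List.replicate σ.length z)
      ≤ (if z = c₀ then 0 else 1) + (σ.map (serveCost z)).sum
  | _, [] => Nat.zero_le _
  | c₀, r :: σ => by
    have ih := schedCost_replicate_le z z σ
    rw [if_pos rfl] at ih
    simp only [List.length_cons, List.replicate_succ, schedCost, List.map_cons, List.sum_cons]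
    omega

lemma OPT_le_schedCost (c₀ : V) (σ : List (V × V)) (cs : List V)
    (h : cs.length = σ.length) : OPT c₀ σ ≤ schedCost c₀ σ cs :=
  Nat.sInf_le ⟨cs, h, rfl⟩

lemma length_le_OPT (c₀ : V) (σ : List (V × V)) : σ.length ≤ OPT c₀ σ :=
  le_csInf ⟨_, List.replicate σ.length c₀, List.length_replicate, rfl⟩
    fun _ ⟨cs, hcs, hk⟩ => hk ▸ length_le_schedCost c₀ σ cs hcs

lemma OPT_le_one_add_sum_serveCost (c₀ z : V) (σ : List (V × V)) :
    OPT c₀ σ ≤ 1 + (σ.map (serveCost z)).sum := by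
  have h := schedCost_replicate_le z c₀ σ
  have := OPT_le_schedCost c₀ σ (List.replicate σ.length z) List.length_replicate
  split at h <;> omega

end Schedules

section Online

variable {V : Type*} (A : V → List (V × V) → V) (c₀ : V)

def onlineCenter (σ : List (V × V)) : V :=
  (onlineSched A c₀ σ).getLastD c₀

lemma length_onlineSched (σ : List (V × V)) :
    (onlineSched A c₀ σ).length = σ.length := by
  simp [onlineSched]

lemma onlineSched_concat (σ : List (V × V)) (r : V × V) :
    onlineSched A c₀ (σ ++ [r]) = onlineSched A c₀ σ ++ [A c₀ (σ ++ [r])] := by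
  simp only [onlineSched, List.length_append, List.length_singleton, List.range_succ,
    List.map_append, List.map_singleton]
  congr 1
  · refine List.map_congr_left fun i hi => ?_
    rw [List.take_append_of_le_length (by simp at hi; omega)]
  · rw [List.take_of_length_le (by simp)]

lemma onlineCost_concat [DecidableEq V] (σ : List (V × V)) (r : V × V) :
    onlineCost A c₀ (σ ++ [r])
      = onlineCost A c₀ σ + schedCost (onlineCenter A c₀ σ) [r] [A c₀ (σ ++ [r])] := by
  rw [onlineCost, onlineSched_concat,
    schedCost_append c₀ σ _ (length_onlineSched A c₀ σ), onlineCost, onlineCenter]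

/-- The adversary's sequence is `(avoidedCenters A c₀ req m).map req`: each request is `req x` for
the center `x` the online algorithm holds at that moment. -/
def avoidedCenters (req : V → V × V) : ℕ → List V
  | 0 => []
  | k + 1 =>
    avoidedCenters req k ++ [onlineCenter A c₀ ((avoidedCenters req k).map req)]

lemma length_avoidedCenters (req : V → V × V) (m : ℕ) :
    (avoidedCenters A c₀ req m).length = m := by
  induction m with
  | zero => rfl
  | succ k ih => simp [avoidedCenters, ih]

lemma two_le_schedCost_singleton [DecidableEq V] {x : V} {r : V × V} (hr : serveCost x r = 2)
    (a : V) : 2 ≤ schedCost x [r] [a] := by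
  rw [schedCost_singleton]
  by_cases hax : a = x
  · subst hax; simp [hr]
  · have := one_le_serveCost a r
    simp only [hax, if_false]
    omega

lemma two_mul_le_onlineCost_avoidedCenters [DecidableEq V] {req : V → V × V}
    (hreq : ∀ x, serveCost x (req x) = 2) (m : ℕ) :
    2 * m ≤ onlineCost A c₀ ((avoidedCenters A c₀ req m).map req) := by
  induction m with
  | zero => exact Nat.zero_le _
  | succ k ih =>
    set σ := (avoidedCenters A c₀ req k).map req
    set r := req (onlineCenter A c₀ σ)
    have hσ : (avoidedCenters A c₀ req (k + 1)).map req = σ ++ [r] := by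
      simp [avoidedCenters, σ, r]
    have step : 2 ≤ schedCost (onlineCenter A c₀ σ) [r] [A c₀ (σ ++ [r])] :=
      two_le_schedCost_singleton (hreq _) _
    rw [hσ, onlineCost_concat]
    omega

end Online

section ThreeNodes

variable {V : Type*}

lemma exists_card_mul_count_le [DecidableEq V] [Fintype V] [Nonempty V] (l : List V) :
    ∃ z, Fintype.card V * l.count z ≤ l.length := by
  have hsum : ∑ z : V, l.count z = l.length := by
    rw [← List.sum_toFinset_count_eq_length]
    exact (Finset.sum_subset (Finset.subset_univ _)
      fun z _ hz => List.count_eq_zero.mpr (by simpa using hz)).symm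
  obtain ⟨z, -, hz⟩ := Finset.exists_le_of_sum_le (f := fun z => Fintype.card V * l.count z)
    (g := fun _ => l.length) Finset.univ_nonempty (by simp [← Finset.mul_sum, hsum])
  exact ⟨z, hz⟩

def complementPair (e : V ≃ Fin 3) (x : V) : V × V :=
  (e.symm (e x + 1), e.symm (e x + 2))

lemma complementPair_fst_ne_snd (e : V ≃ Fin 3) (x : V) :
    (complementPair e x).1 ≠ (complementPair e x).2 := by
  simp only [complementPair, ne_eq, EmbeddingLike.apply_eq_iff_eq]
  generalize e x = a
  revert a; decide

lemma serveCost_complementPair [DecidableEq V] (e : V ≃ Fin 3) (z x : V) :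
    serveCost z (complementPair e x) = if z = x then 2 else 1 := by
  simp only [serveCost, complementPair, ← e.apply_eq_iff_eq (x := z), Equiv.apply_symm_apply]
  generalize e z = a, e x = b
  revert a b; decide

lemma sum_map_ite_eq_length_add_count [DecidableEq V] (z : V) (l : List V) :
    (l.map fun x => if z = x then 2 else 1).sum = l.length + l.count z := by
  induction l with
  | nil => rfl
  | cons x l ih =>
    by_cases h : z = x
    · subst h
      simp [ih]
      omega
    · simp [h, Ne.symm h, ih]
      omega

end ThreeNodes

lemma mul_le_of_three_halves_bound {c : ℝ} (hc : c < 3 / 2) {n opt alg : ℕ}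
    (hn : 3 * c / (6 - 4 * c) ≤ n) (hopt : 3 * opt ≤ 4 * n + 3) (halg : 2 * n ≤ alg) :
    c * opt ≤ alg := by
  have hpos : (0 : ℝ) < 6 - 4 * c := by linarith
  rw [div_le_iff₀ hpos] at hn
  have hopt' : (3 * opt : ℝ) ≤ 4 * n + 3 := by exact_mod_cast hopt
  have halg' : (2 * n : ℝ) ≤ alg := by exact_mod_cast halg
  rcases le_or_gt c 0 with hc0 | hc0 <;> nlinarith

/-- On the star with exactly `n = 3` nodes: for every
deterministic online algorithm `A` and every real `c < 3/2`, there exists a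
finite request sequence `σ` (of unordered pairs of distinct nodes, with
`OPT(σ) > 0`) such that `A(σ) ≥ c · OPT(σ)`.  Hence no deterministic online
algorithm is `c`-competitive for any `c < 3/2`. -/
theorem no_deterministic_better_than_three_halves
    {V : Type*} [DecidableEq V] [Fintype V] (h3 : Fintype.card V = 3)
    (A : V → List (V × V) → V) (c₀ : V) (c : ℝ) (hc : c < 3 / 2) :
    ∃ σ : List (V × V), (∀ r ∈ σ, r.1 ≠ r.2) ∧ 0 < OPT c₀ σ ∧
      c * (OPT c₀ σ : ℝ) ≤ (onlineCost A c₀ σ : ℝ) := by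
  obtain ⟨n, hn⟩ := exists_nat_ge (3 * c / (6 - 4 * c))
  let e := Fintype.equivFinOfCardEq h3
  have : Nonempty V := ⟨e.symm 0⟩
  set l := avoidedCenters A c₀ (complementPair e) (n + 1)
  have hlen : l.length = n + 1 := length_avoidedCenters A c₀ _ _
  refine ⟨l.map (complementPair e), ?_, ?_, ?_⟩
  · simpa using fun x _ => complementPair_fst_ne_snd e x
  · have := length_le_OPT c₀ (l.map (complementPair e))
    simp only [List.length_map, hlen] at this
    omega
  · obtain ⟨z, hz⟩ := exists_card_mul_count_le l
    have hopt : OPT c₀ (l.map (complementPair e)) ≤ 1 + (n + 1 + l.count z) := by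
      simpa [Function.comp_def, serveCost_complementPair, sum_map_ite_eq_length_add_count, hlen]
        using OPT_le_one_add_sum_serveCost c₀ z (l.map (complementPair e))
    have halg := two_mul_le_onlineCost_avoidedCenters A c₀ (req := complementPair e)
      (fun x => by simp [serveCost_complementPair]) (n + 1)
    rw [h3] at hz
    exact mul_le_of_three_halves_bound hc (by push_cast; linarith) (by omega) halg
end

section
/- Run PivotTracking on a finite request sequence σ and consider any run of γ ≥ 1 consecutive requests on each of which PivotTracking applies its intersection behavior. Then the total cost (migrations plus serving costs) that PivotTracking pays on these γ requests is at most γ + min{2, γ}. -/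
/-- The sequence of states of PivotTracking: `(ptStates tb c₀ σ).get i` is the
state (center, candidate set) just before the `i`-th request is served. -/
def ptStates {V : Type*} [DecidableEq V] (tb : V → V → V) (c₀ : V)
    (σ : List (V × V)) : List (V × Finset V) :=
  σ.scanl (ptStep tb) (c₀, {c₀})

/-- The cost (migration plus serving) PivotTracking pays on the `i`-th
request of `σ` (0-based). -/
def ptPay {V : Type*} [DecidableEq V] (tb : V → V → V) (c₀ : V)
    (σ : List (V × V)) (i : ℕ) : ℕ :=
  (if ((ptStates tb c₀ σ).getD (i + 1) (c₀, {c₀})).1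
      = ((ptStates tb c₀ σ).getD i (c₀, {c₀})).1 then 0 else 1)
    + serveCost ((ptStates tb c₀ σ).getD (i + 1) (c₀, {c₀})).1 (σ.getD i (c₀, c₀))

/-!
On an intersection step PivotTracking keeps its center inside the new candidate set
`C ∩ σₜ ⊆ σₜ`, so it serves at cost 1, and it migrates only when the old center leaves `C`,
i.e. when `C` shrinks strictly. Since `C` always contains the center and has at most two
elements after an intersection step, the potential `min |C| 3` drops by at least one per
migration, from at most 3 to at least 1: a run of `γ` such steps has at most `min 2 γ`
migrations.
-/

theorem List.getD_scanl_succ {α β : Type*} (f : β → α → β) (b d : β) (d' : α) {l : List α}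
    {i : ℕ} (hi : i < l.length) :
    (l.scanl f b).getD (i + 1) d = f ((l.scanl f b).getD i d) (l.getD i d') := by
  simp [List.getD_eq_getElem?_getD, List.getElem?_succ_scanl, List.getElem?_eq_getElem hi,
    List.getElem?_eq_getElem (by simpa using hi.le : i < (l.scanl f b).length)]

theorem Finset.sum_Ico_add_le_of_add_le {a Φ : ℕ → ℕ} {j γ : ℕ}
    (h : ∀ k, j ≤ k → k < j + γ → a k + Φ (k + 1) ≤ Φ k) :
    ∑ k ∈ Finset.Ico j (j + γ), a k + Φ (j + γ) ≤ Φ j := by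
  induction γ with
  | zero => simp
  | succ γ ih =>
    have hlast := h (j + γ) (Nat.le_add_right j γ) (by omega)
    have hprev := ih fun k hjk hk => h k hjk (by omega)
    rw [← add_assoc, Finset.sum_Ico_succ_top (Nat.le_add_right j γ)]
    omega

theorem serveCost_eq_one {V : Type*} [DecidableEq V] {c : V} {r : V × V}
    (hc : c ∈ ({r.1, r.2} : Finset V)) : serveCost c r = 1 := by
  rw [serveCost, if_pos (by simpa using hc)]

def migrationCost {V : Type*} [DecidableEq V] (c c' : V) : ℕ :=
  if c' = c then 0 else 1

theorem migrationCost_le_one {V : Type*} [DecidableEq V] (c c' : V) : migrationCost c c' ≤ 1 := by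
  unfold migrationCost
  split_ifs <;> omega

section PivotTracking

variable {V : Type*} [DecidableEq V] (tb : V → V → V)

theorem ptStep_snd_of_inter {s : V × Finset V} {r : V × V}
    (h : (s.2 ∩ {r.1, r.2}).Nonempty) : (ptStep tb s r).2 = s.2 ∩ {r.1, r.2} := by
  simp only [ptStep, if_pos h]

theorem ptStep_fst_of_mem_inter {s : V × Finset V} {r : V × V}
    (h : s.1 ∈ s.2 ∩ {r.1, r.2}) : (ptStep tb s r).1 = s.1 := by
  simp only [ptStep, if_pos h]
  split_ifs <;> rfl

theorem ptStep_fst_mem_snd_s8 (htb : ∀ u v : V, tb u v = u ∨ tb u v = v) {s : V × Finset V}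
    {r : V × V} (hs : s.1 ∈ s.2) : (ptStep tb s r).1 ∈ (ptStep tb s r).2 := by
  simp only [ptStep]
  split_ifs with hI hstay hpair hr₁
  · exact hstay
  · rcases htb r.1 r.2 with h | h <;> simp [hpair, h]
  · exact hr₁
  · obtain ⟨x, hx⟩ := hI
    obtain rfl | rfl : x = r.1 ∨ x = r.2 := by simpa using (Finset.mem_inter.1 hx).2
    exacts [absurd hx hr₁, hx]
  · exact Finset.mem_union_left _ hs

theorem ptStep_fst_mem_pair (htb : ∀ u v : V, tb u v = u ∨ tb u v = v) {s : V × Finset V}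
    {r : V × V} (hs : s.1 ∈ s.2) (h : (s.2 ∩ {r.1, r.2}).Nonempty) :
    (ptStep tb s r).1 ∈ ({r.1, r.2} : Finset V) := by
  have hmem := ptStep_fst_mem_snd_s8 tb htb (r := r) hs
  rw [ptStep_snd_of_inter tb h] at hmem
  exact (Finset.mem_inter.1 hmem).2

theorem migrationCost_ptStep_add_min_card_le {s : V × Finset V} {r : V × V} (hs : s.1 ∈ s.2)
    (h : (s.2 ∩ {r.1, r.2}).Nonempty) :
    migrationCost s.1 (ptStep tb s r).1 + min (ptStep tb s r).2.card 3 ≤ min s.2.card 3 := by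
  rw [ptStep_snd_of_inter tb h]
  have hsub : s.2 ∩ {r.1, r.2} ⊆ s.2 := Finset.inter_subset_left
  by_cases hstay : s.1 ∈ s.2 ∩ {r.1, r.2}
  · rw [migrationCost, if_pos (ptStep_fst_of_mem_inter tb hstay)]
    have := Finset.card_le_card hsub
    omega
  · have hlt : (s.2 ∩ {r.1, r.2}).card < s.2.card :=
      Finset.card_lt_card (hsub.ssubset_of_ne fun he => hstay (he.symm ▸ hs))
    have hpair : (s.2 ∩ {r.1, r.2}).card ≤ 2 :=
      (Finset.card_le_card Finset.inter_subset_right).trans Finset.card_le_two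
    have := migrationCost_le_one s.1 (ptStep tb s r).1
    omega

variable (c₀ : V) (σ : List (V × V))

theorem ptStates_getD_succ {k : ℕ} (hk : k < σ.length) :
    (ptStates tb c₀ σ).getD (k + 1) (c₀, {c₀}) =
      ptStep tb ((ptStates tb c₀ σ).getD k (c₀, {c₀})) (σ.getD k (c₀, c₀)) :=
  List.getD_scanl_succ _ _ _ _ hk

theorem ptStates_getD_fst_mem_snd (htb : ∀ u v : V, tb u v = u ∨ tb u v = v) {k : ℕ}
    (hk : k ≤ σ.length) :
    ((ptStates tb c₀ σ).getD k (c₀, {c₀})).1 ∈ ((ptStates tb c₀ σ).getD k (c₀, {c₀})).2 := by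
  induction k with
  | zero => simp [ptStates]
  | succ k ih =>
    rw [ptStates_getD_succ tb c₀ σ (by omega)]
    exact ptStep_fst_mem_snd_s8 tb htb (ih (by omega))

end PivotTracking

theorem pivotTracking_intersection_run_cost_general
    {V : Type*} [DecidableEq V]
    (c₀ : V) (σ : List (V × V))
    (tb : V → V → V) (htb : ∀ u v : V, tb u v = u ∨ tb u v = v)
    (j γ : ℕ) (hlen : j + γ ≤ σ.length)
    (hint : ∀ k, j ≤ k → k < j + γ →
      (((ptStates tb c₀ σ).getD k (c₀, {c₀})).2 ∩
        {(σ.getD k (c₀, c₀)).1, (σ.getD k (c₀, c₀)).2}).Nonempty) :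
    ∑ k ∈ Finset.Ico j (j + γ), ptPay tb c₀ σ k ≤ γ + min 2 γ := by
  set st : ℕ → V × Finset V := fun k => (ptStates tb c₀ σ).getD k (c₀, {c₀})
  set mig : ℕ → ℕ := fun k => migrationCost (st k).1 (st (k + 1)).1
  have hmem (k : ℕ) (hk : k ≤ σ.length) : (st k).1 ∈ (st k).2 :=
    ptStates_getD_fst_mem_snd tb c₀ σ htb hk
  have hstep (k : ℕ) (hk : k < σ.length) : st (k + 1) = ptStep tb (st k) (σ.getD k (c₀, c₀)) :=
    ptStates_getD_succ tb c₀ σ hk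
  have hpay (k : ℕ) (hk : k ∈ Finset.Ico j (j + γ)) : ptPay tb c₀ σ k = mig k + 1 := by
    obtain ⟨hjk, hkγ⟩ := Finset.mem_Ico.1 hk
    show mig k + serveCost (st (k + 1)).1 (σ.getD k (c₀, c₀)) = mig k + 1
    rw [hstep k (by omega),
      serveCost_eq_one (ptStep_fst_mem_pair tb htb (hmem k (by omega)) (hint k hjk hkγ))]
  have hmig_two : ∑ k ∈ Finset.Ico j (j + γ), mig k ≤ 2 := by
    have htel := Finset.sum_Ico_add_le_of_add_le (a := mig) (Φ := fun k => min (st k).2.card 3)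
      (j := j) (γ := γ) fun k hjk hkγ => by
        simp only [mig]
        rw [hstep k (by omega)]
        exact migrationCost_ptStep_add_min_card_le tb (hmem k (by omega)) (hint k hjk hkγ)
    have hend := Finset.card_pos.2 ⟨_, hmem (j + γ) hlen⟩
    have := min_le_right (st j).2.card 3
    omega
  have hmig_le : ∑ k ∈ Finset.Ico j (j + γ), mig k ≤ γ := by
    simpa using Finset.sum_le_card_nsmul (Finset.Ico j (j + γ)) mig 1 fun k _ =>
      migrationCost_le_one _ _
  rw [Finset.sum_congr rfl hpay, Finset.sum_add_distrib]
  simp only [Finset.sum_const, Nat.card_Ico, smul_eq_mul, mul_one, add_tsub_cancel_left]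
  omega

/-- Run PivotTracking on a finite request sequence `σ` and
consider any run of `γ ≥ 1` consecutive requests (indices `j, …, j+γ-1`) on
each of which PivotTracking applies its intersection behavior.  Then the total
cost (migrations plus serving costs) PivotTracking pays on these `γ` requests
is at most `γ + min 2 γ`. -/
theorem pivotTracking_intersection_run_cost
    {V : Type*} [DecidableEq V] [Fintype V] (hn : 3 ≤ Fintype.card V)
    (c₀ : V) (σ : List (V × V)) (hσ : ∀ r ∈ σ, r.1 ≠ r.2)
    (tb : V → V → V) (htb : ∀ u v : V, tb u v = u ∨ tb u v = v)
    (j γ : ℕ) (hγ : 1 ≤ γ) (hlen : j + γ ≤ σ.length)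
    (hint : ∀ k, j ≤ k → k < j + γ →
      (((ptStates tb c₀ σ).getD k (c₀, {c₀})).2 ∩
        {(σ.getD k (c₀, c₀)).1, (σ.getD k (c₀, c₀)).2}).Nonempty) :
    ∑ k ∈ Finset.Ico j (j + γ), ptPay tb c₀ σ k ≤ γ + min 2 γ :=
  pivotTracking_intersection_run_cost_general c₀ σ tb htb j γ hlen hint
end
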